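/- arXiv:1708.02240 — 5 statements merged into one kernel-verified Lean document; each statement's English description precedes it below -/
import Mathlib

section
/- Let λ > 0 and let ∑_{k=0}^∞ x_k be a convergent series with non-negative terms such that λ·x_n ≥ ∑_{k=n+1}^∞ x_k for all n ≥ 0. Then for 0 < α ≤ 1 we have ∑_{k=0}^∞ x_k^α ≤ (1/((λ+1)^α − λ^α)) · (∑_{k=0}^∞ x_k)^α. -/
/-!
Let `T n = ∑_{k ≥ n} x k` be the tails, so `T n = x n + T (n + 1)`. The four points
`T (n + 1) ≤ λ x n ≤ (λ + 1) x n` and `T n` satisfy `T (n + 1) + (λ + 1) x n = λ x n + T n`, so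
concavity of `u ↦ u ^ α` gives `((λ + 1) ^ α - λ ^ α) x n ^ α ≤ T n ^ α - T (n + 1) ^ α`.
Summing over `n` telescopes to `T 0 ^ α`.
-/

open Finset

theorem ConcaveOn.add_le_add_of_add_eq {𝕜 : Type*} [Field 𝕜] [LinearOrder 𝕜]
    [IsStrictOrderedRing 𝕜] {s : Set 𝕜} {f : 𝕜 → 𝕜} (hf : ConcaveOn 𝕜 s f) {a b c d : 𝕜}
    (ha : a ∈ s) (hd : d ∈ s) (hab : a ≤ b) (hbd : b ≤ d) (hsum : b + c = a + d) :
    f a + f d ≤ f b + f c := by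
  rcases hab.eq_or_lt with rfl | hlt
  · obtain rfl : c = d := by linarith
    exact le_rfl
  have hda : 0 < d - a := by linarith
  set μ := (d - b) / (d - a)
  have hμ0 : 0 ≤ μ := div_nonneg (by linarith) hda.le
  have hμ1 : 0 ≤ 1 - μ := sub_nonneg.2 ((div_le_one hda).2 (by linarith))
  have hb : μ * a + (1 - μ) * d = b := by simp only [μ]; field_simp; ring
  have hc : (1 - μ) * a + μ * d = c := by
    simp only [μ]; field_simp; linear_combination (a - d) * hsum
  have h1 : μ * f a + (1 - μ) * f d ≤ f b := hb ▸ hf.2 ha hd hμ0 hμ1 (by ring)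
  have h2 : (1 - μ) * f a + μ * f d ≤ f c := hc ▸ hf.2 ha hd hμ1 hμ0 (by ring)
  linear_combination h1 + h2

theorem rpow_gap_mul_rpow_le_rpow_add_sub {α lam y r : ℝ} (hα0 : 0 ≤ α) (hα1 : α ≤ 1)
    (hlam : 0 ≤ lam) (hy : 0 ≤ y) (hr : 0 ≤ r) (hrle : r ≤ lam * y) :
    ((lam + 1) ^ α - lam ^ α) * y ^ α ≤ (y + r) ^ α - r ^ α := by
  have h := (Real.concaveOn_rpow hα0 hα1).add_le_add_of_add_eq (c := y + r) (d := (lam + 1) * y)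
    (Set.mem_Ici.2 hr) (Set.mem_Ici.2 (by positivity)) hrle (by nlinarith) (by ring)
  rw [Real.mul_rpow (by positivity) hy, Real.mul_rpow hlam hy] at h
  linarith

theorem summable_and_tsum_le_of_le_sub_succ {a b : ℕ → ℝ} (ha : ∀ n, 0 ≤ a n)
    (hb : ∀ n, 0 ≤ b n) (hab : ∀ n, a n ≤ b n - b (n + 1)) :
    Summable a ∧ ∑' n, a n ≤ b 0 := by
  have hpartial : ∀ N, ∑ n ∈ range N, a n ≤ b 0 := fun N =>
    calc ∑ n ∈ range N, a n
        ≤ ∑ n ∈ range N, (b n - b (n + 1)) := sum_le_sum fun n _ => hab n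
      _ = b 0 - b N := sum_range_sub' b N
      _ ≤ b 0 := sub_le_self _ (hb N)
  have hs := summable_of_sum_range_le ha hpartial
  exact ⟨hs, hs.tsum_le_of_sum_range_le hpartial⟩

theorem tsum_nat_add_eq_add_tsum_succ_add {G : Type*} [AddCommGroup G] [TopologicalSpace G]
    [IsTopologicalAddGroup G] [T2Space G] {x : ℕ → G} (hx : Summable x) (n : ℕ) :
    ∑' k, x (n + k) = x n + ∑' k, x (n + 1 + k) := by
  have hs : Summable fun k => x (n + k) := by
    simpa only [add_comm n] using (summable_nat_add_iff n).2 hx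
  rw [hs.tsum_eq_zero_add]
  simp only [add_zero, add_assoc, add_comm 1]

theorem stmt0 (lam : ℝ) (hlam : 0 < lam) (x : ℕ → ℝ) (hx : ∀ k, 0 ≤ x k)
    (hsum : Summable x) (hdom : ∀ n : ℕ, ∑' k : ℕ, x (n + 1 + k) ≤ lam * x n)
    (α : ℝ) (hα0 : 0 < α) (hα1 : α ≤ 1) :
    Summable (fun k => x k ^ α) ∧
      ∑' k : ℕ, x k ^ α ≤ (1 / ((lam + 1) ^ α - lam ^ α)) * (∑' k : ℕ, x k) ^ α := by
  set T : ℕ → ℝ := fun n => ∑' k, x (n + k)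
  have hT : ∀ n, 0 ≤ T n := fun n => tsum_nonneg fun k => hx _
  have hgap : 0 < (lam + 1) ^ α - lam ^ α :=
    sub_pos.2 (Real.rpow_lt_rpow hlam.le (lt_add_one lam) hα0)
  have hstep : ∀ n, x n ^ α ≤ T n ^ α / ((lam + 1) ^ α - lam ^ α)
      - T (n + 1) ^ α / ((lam + 1) ^ α - lam ^ α) := fun n => by
    rw [← sub_div, le_div_iff₀ hgap, mul_comm]
    simp only [T, tsum_nat_add_eq_add_tsum_succ_add hsum n]
    exact rpow_gap_mul_rpow_le_rpow_add_sub hα0.le hα1 hlam.le (hx n) (hT (n + 1)) (hdom n)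
  obtain ⟨hs, hle⟩ := summable_and_tsum_le_of_le_sub_succ (fun k => Real.rpow_nonneg (hx k) α)
    (fun n => div_nonneg (Real.rpow_nonneg (hT n) α) hgap.le) hstep
  refine ⟨hs, ?_⟩
  simpa only [T, zero_add, one_div_mul_eq_div] using hle
end

section
/- Let ν : [0,∞) → [0,∞) be a nondecreasing function with ν(t) > 0 for t > 0, such that limsup_{s→0+} (∫_0^s ν(t)/t dt)/ν(s) < ∞ (in particular the integrals are finite for small s). Then there exist a constant C > 0 and a positive integer k₀ such that for all integers k ≥ k₀, ∑_{j=k+1}^∞ ν(2^{-j}) ≤ C·ν(2^{-k}). -/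
/-!
On the dyadic interval `(a / 2^(j+1), a / 2^j]` monotonicity gives
`ν t / t ≥ ν (a / 2^(j+1)) / (a / 2^j)`, so the integral of `ν t / t` over that interval is at
least `ν (a / 2^(j+1)) / 2`. These intervals are disjoint and lie in `(0, a]`, hence
`∑ j, ν (a / 2^(j+1)) ≤ 2 ∫_{(0,a]} ν t / t`, and the limsup hypothesis bounds the right side
by `2 M ν a` once `a = 2^(-k)` is small enough.
-/

open Filter MeasureTheory Set

section
variable {ν : ℝ → ℝ}

theorem div_mul_sub_le_setIntegral_Ioc {b c : ℝ} (hb : 0 < b) (hbc : b ≤ c)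
    (hmono : MonotoneOn ν (Icc b c)) (hνb : 0 ≤ ν b)
    (hint : IntegrableOn (fun t => ν t / t) (Ioc b c)) :
    ν b / c * (c - b) ≤ ∫ t in Ioc b c, ν t / t := by
  have hlower : ∀ t ∈ Ioc b c, ν b / c ≤ ν t / t := fun t ht =>
    div_le_div₀ (hνb.trans (hmono (left_mem_Icc.2 hbc) (Ioc_subset_Icc_self ht) ht.1.le))
      (hmono (left_mem_Icc.2 hbc) (Ioc_subset_Icc_self ht) ht.1.le) (hb.trans ht.1) ht.2
  simpa [measureReal_def, Real.volume_Ioc, hbc] using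
    setIntegral_ge_of_const_le_real measurableSet_Ioc measure_Ioc_lt_top.ne hlower hint

theorem summable_and_tsum_le_two_mul_setIntegral_div {a : ℝ} (ha : 0 < a)
    (hmono : MonotoneOn ν (Ioc 0 a)) (hnonneg : ∀ t ∈ Ioc 0 a, 0 ≤ ν t)
    (hint : IntegrableOn (fun t => ν t / t) (Ioc 0 a)) :
    Summable (fun j : ℕ => ν (a / 2 ^ (j + 1))) ∧
      ∑' j : ℕ, ν (a / 2 ^ (j + 1)) ≤ 2 * ∫ t in Ioc 0 a, ν t / t := by
  set s : ℕ → Set ℝ := fun j => Ioc (a / 2 ^ (j + 1)) (a / 2 ^ j)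
  have hanti : Antitone fun j : ℕ => a / 2 ^ j := fun i j hij =>
    div_le_div_of_nonneg_left ha.le (by positivity) (pow_le_pow_right₀ one_le_two hij)
  have hstep : ∀ j : ℕ, a / 2 ^ (j + 1) ≤ a / 2 ^ j := fun j => hanti j.le_succ
  have hsub : ∀ j, Icc (a / 2 ^ (j + 1)) (a / 2 ^ j) ⊆ Ioc 0 a := fun j =>
    Icc_subset_Ioc (by positivity) (by simpa using hanti (Nat.zero_le j))
  have hs : ⋃ j, s j ⊆ Ioc 0 a := iUnion_subset fun j => Ioc_subset_Icc_self.trans (hsub j)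
  have hpiece : ∀ j, ν (a / 2 ^ (j + 1)) ≤ 2 * ∫ t in s j, ν t / t := by
    intro j
    have := div_mul_sub_le_setIntegral_Ioc (by positivity) (hstep j)
      (hmono.mono (hsub j)) (hnonneg _ (hsub j (left_mem_Icc.2 (hstep j))))
      (hint.mono_set (Ioc_subset_Icc_self.trans (hsub j)))
    have hhalf : ν (a / 2 ^ (j + 1)) / (a / 2 ^ j) * (a / 2 ^ j - a / 2 ^ (j + 1))
        = ν (a / 2 ^ (j + 1)) / 2 := by
      field_simp; ring
    linarith
  have hsum : HasSum (fun j => ∫ t in s j, ν t / t) (∫ t in ⋃ j, s j, ν t / t) :=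
    hasSum_integral_iUnion (fun _ => measurableSet_Ioc)
      (by simpa using hanti.pairwise_disjoint_on_Ioc_succ) (hint.mono_set hs)
  have hunion : ∫ t in ⋃ j, s j, ν t / t ≤ ∫ t in Ioc 0 a, ν t / t :=
    setIntegral_mono_set hint
      ((ae_restrict_iff' measurableSet_Ioc).2 (Eventually.of_forall fun t ht =>
        div_nonneg (hnonneg t ht) ht.1.le)) hs.eventuallyLE
  have hsummable : Summable fun j : ℕ => ν (a / 2 ^ (j + 1)) :=
    (hsum.summable.mul_left 2).of_nonneg_of_le
      (fun j => hnonneg _ (hsub j (left_mem_Icc.2 (hstep j)))) hpiece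
  exact ⟨hsummable, (hasSum_le hpiece hsummable.hasSum (hsum.mul_left 2)).trans (by linarith)⟩

end

theorem stmt2_general (ν : ℝ → ℝ) (hmono : MonotoneOn ν (Set.Ici 0))
    (hpos : ∀ t, 0 < t → 0 < ν t)
    (hint : ∃ s₀ > (0:ℝ), IntegrableOn (fun t => ν t / t) (Set.Ioc 0 s₀))
    (hlimsup : ∃ M : ℝ, ∀ᶠ s in nhdsWithin 0 (Set.Ioi 0),
      (∫ t in Set.Ioc (0:ℝ) s, ν t / t) / ν s ≤ M) :
    ∃ C > (0:ℝ), ∃ k₀ : ℕ, 0 < k₀ ∧ ∀ k ≥ k₀,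
      Summable (fun j : ℕ => ν ((2:ℝ) ^ (-((k:ℤ) + 1 + j)))) ∧
      ∑' j : ℕ, ν ((2:ℝ) ^ (-((k:ℤ) + 1 + j))) ≤ C * ν ((2:ℝ) ^ (-(k:ℤ))) := by
  obtain ⟨s₀, hs₀, hI⟩ := hint
  obtain ⟨M, hM⟩ := hlimsup
  have hdyadic : Tendsto (fun k : ℕ => (2:ℝ) ^ (-(k:ℤ))) atTop (nhdsWithin 0 (Ioi 0)) := by
    simp only [zpow_neg, zpow_natCast]
    exact tendsto_inv_atTop_nhdsGT_zero.comp (tendsto_pow_atTop_atTop_of_one_lt one_lt_two)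
  obtain ⟨k₀, hk₀⟩ :=
    eventually_atTop.1 ((hdyadic.eventually hM).and (hdyadic.eventually (Ioc_mem_nhdsGT hs₀)))
  refine ⟨max (2 * M) 1, by positivity, max k₀ 1, by positivity, fun k hk => ?_⟩
  obtain ⟨hratio, ha, has₀⟩ := hk₀ k (le_of_max_le_left hk)
  set a : ℝ := 2 ^ (-(k:ℤ))
  have hterm : ∀ j : ℕ, ν (2 ^ (-((k:ℤ) + 1 + j))) = ν (a / 2 ^ (j + 1)) := fun j => by
    rw [← zpow_natCast, ← zpow_sub₀ two_ne_zero]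
    push_cast
    ring_nf
  simp only [hterm]
  obtain ⟨hsum, hle⟩ := summable_and_tsum_le_two_mul_setIntegral_div ha
    (hmono.mono fun t ht => ht.1.le) (fun t ht => (hpos t ht.1).le)
    (hI.mono_set (Ioc_subset_Ioc_right has₀))
  have hint_le : ∫ t in Ioc 0 a, ν t / t ≤ M * ν a := (div_le_iff₀ (hpos a ha)).1 hratio
  refine ⟨hsum, hle.trans ?_⟩
  calc 2 * ∫ t in Ioc 0 a, ν t / t ≤ 2 * M * ν a := by linarith
    _ ≤ max (2 * M) 1 * ν a := by gcongr; exacts [(hpos a ha).le, le_max_left _ _]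

theorem stmt2 (ν : ℝ → ℝ) (hmono : MonotoneOn ν (Set.Ici 0))
    (hnonneg : ∀ t, 0 ≤ t → 0 ≤ ν t) (hpos : ∀ t, 0 < t → 0 < ν t)
    (hint : ∃ s₀ > (0:ℝ), IntegrableOn (fun t => ν t / t) (Set.Ioc 0 s₀))
    (hlimsup : ∃ M : ℝ, ∀ᶠ s in nhdsWithin 0 (Set.Ioi 0),
      (∫ t in Set.Ioc (0:ℝ) s, ν t / t) / ν s ≤ M) :
    ∃ C > (0:ℝ), ∃ k₀ : ℕ, 0 < k₀ ∧ ∀ k ≥ k₀,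
      Summable (fun j : ℕ => ν ((2:ℝ) ^ (-((k:ℤ) + 1 + j)))) ∧
      ∑' j : ℕ, ν ((2:ℝ) ^ (-((k:ℤ) + 1 + j))) ≤ C * ν ((2:ℝ) ^ (-(k:ℤ))) :=
  stmt2_general ν hmono hpos hint hlimsup
end

section
/- Let ν : [0,∞) → [0,∞) be a nondecreasing function, positive on (0,∞), satisfying limsup_{s→0+} (∫_0^s ν(t)/t dt)/ν(s) < ∞. Then for every α with 0 < α ≤ 1, the series ∑_{j=1}^∞ ν(2^{-j})^α converges. -/
/-!
Write `a k = ν (2⁻¹ ^ k)`. Monotonicity of `ν` gives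
`log 2 * a (k + 1) ≤ ∫ t in Ioc (2⁻¹ ^ (k + 1)) (2⁻¹ ^ k), ν t / t`, so summing these dyadic pieces,
the limsup bound says that the tails `T j = ∑_{i > j} a i` satisfy `T j ≤ C * a j` for large `j`.
Since `a (j + 1) = T j - T (j + 1)`, this gives `T (j + 1) ≤ C / (C + 1) * T j`: the tails, and
with them the `a j`, decay geometrically, so `∑ a j ^ α` converges for every `α > 0`.
-/

open Filter MeasureTheory Set

section TailBound

variable {a : ℕ → ℝ} {C : ℝ} {J : ℕ}

theorem tsum_tail_succ_le (hs : Summable a) (hC : 0 ≤ C)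
    (h : ∀ j ≥ J, ∑' i, a (i + j + 1) ≤ C * a j) {j : ℕ} (hj : J ≤ j) :
    ∑' i, a (i + (j + 1) + 1) ≤ C / (C + 1) * ∑' i, a (i + j + 1) := by
  have hsplit : ∑' i, a (i + j + 1) = a (j + 1) + ∑' i, a (i + (j + 1) + 1) := by
    have hsum : Summable fun i => a (i + j + 1) := (summable_nat_add_iff (j + 1)).2 hs
    rw [hsum.tsum_eq_zero_add]
    ring_nf
  have hnext := h (j + 1) (by omega)
  rw [div_mul_eq_mul_div, le_div_iff₀ (by positivity), hsplit]
  linarith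

theorem tsum_tail_le_geometric (hs : Summable a) (hC : 0 ≤ C)
    (h : ∀ j ≥ J, ∑' i, a (i + j + 1) ≤ C * a j) (m : ℕ) :
    ∑' i, a (i + (J + m) + 1) ≤ (C / (C + 1)) ^ m * ∑' i, a (i + J + 1) := by
  induction m with
  | zero => simp
  | succ m ih =>
    calc ∑' i, a (i + (J + (m + 1)) + 1)
        ≤ C / (C + 1) * ∑' i, a (i + (J + m) + 1) :=
          tsum_tail_succ_le hs hC h (Nat.le_add_right J m)
      _ ≤ C / (C + 1) * ((C / (C + 1)) ^ m * ∑' i, a (i + J + 1)) := by gcongr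
      _ = (C / (C + 1)) ^ (m + 1) * ∑' i, a (i + J + 1) := by ring

theorem summable_rpow_of_sum_tail_le (ha : ∀ n, 0 ≤ a n) (hC : 0 ≤ C)
    (h : ∀ j ≥ J, ∀ n, ∑ i ∈ Finset.range n, a (i + j + 1) ≤ C * a j) {α : ℝ} (hα : 0 < α) :
    Summable fun n => a n ^ α := by
  have hs : Summable a :=
    (summable_nat_add_iff (J + 1)).1 (summable_of_sum_range_le (fun _ => ha _) (h J le_rfl))
  have htail : ∀ j ≥ J, ∑' i, a (i + j + 1) ≤ C * a j := fun j hj =>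
    Real.tsum_le_of_sum_range_le (fun _ => ha _) (h j hj)
  set r := C / (C + 1)
  set T := ∑' i, a (i + J + 1)
  have hr : 0 ≤ r := by positivity
  have hr1 : r < 1 := (div_lt_one (by positivity)).2 (lt_add_one C)
  have hdecay : ∀ m, a (m + (J + 1)) ^ α ≤ T ^ α * (r ^ α) ^ m := fun m => by
    have hle : a (m + (J + 1)) ≤ T * r ^ m := by
      calc a (m + (J + 1)) = a (0 + (J + m) + 1) := by congr 1; omega
        _ ≤ ∑' i, a (i + (J + m) + 1) :=
          ((summable_nat_add_iff (J + m + 1)).2 hs).le_tsum 0 fun i _ => ha _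
        _ ≤ T * r ^ m := by
          rw [mul_comm]; exact tsum_tail_le_geometric hs hC htail m
    calc a (m + (J + 1)) ^ α ≤ (T * r ^ m) ^ α := by gcongr; exact ha _
      _ = T ^ α * (r ^ α) ^ m := by
        rw [Real.mul_rpow (tsum_nonneg fun _ => ha _) (by positivity), Real.rpow_pow_comm hr]
  refine (summable_nat_add_iff (J + 1)).1 ?_
  exact .of_nonneg_of_le (fun _ => Real.rpow_nonneg (ha _) α) hdecay
    ((summable_geometric_of_lt_one (by positivity) (Real.rpow_lt_one hr hr1 hα)).mul_left _)

end TailBound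

theorem mul_log_div_le_setIntegral_div {ν : ℝ → ℝ} {c s : ℝ} (hc : 0 < c) (hcs : c ≤ s)
    (hmono : MonotoneOn ν (Icc c s)) (hI : IntegrableOn (fun t => ν t / t) (Ioc c s)) :
    ν c * Real.log (s / c) ≤ ∫ t in Ioc c s, ν t / t := by
  have hzero : (0 : ℝ) ∉ uIcc c s := by
    rw [uIcc_of_le hcs]; exact fun h => h.1.not_gt hc
  have hconst : ∫ t in Ioc c s, ν c / t = ν c * Real.log (s / c) := by
    simp only [← intervalIntegral.integral_of_le hcs, div_eq_mul_inv (ν c),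
      intervalIntegral.integral_const_mul, integral_inv hzero]
  have hIconst : IntegrableOn (fun t => ν c / t) (Ioc c s) :=
    (continuousOn_const.div continuousOn_id fun t ht => (hc.trans_le ht.1).ne').integrableOn_Icc
      |>.mono_set Ioc_subset_Icc_self
  rw [← hconst]
  refine setIntegral_mono_on hIconst hI measurableSet_Ioc fun t ht => ?_
  have hνt : ν c ≤ ν t := hmono ⟨le_rfl, hcs⟩ (Ioc_subset_Icc_self ht) ht.1.le
  gcongr
  exact (hc.trans ht.1).le

theorem sum_setIntegral_Ioc_succ_le {f : ℝ → ℝ} {x : ℕ → ℝ} (hx : Antitone x)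
    (hx0 : ∀ n, 0 ≤ x n) (hf : ∀ t ∈ Ioc 0 (x 0), 0 ≤ f t) (hI : IntegrableOn f (Ioc 0 (x 0)))
    (n : ℕ) : ∑ i ∈ Finset.range n, ∫ t in Ioc (x (i + 1)) (x i), f t ≤ ∫ t in Ioc 0 (x 0), f t := by
  have hsub : ∀ i, Ioc (x (i + 1)) (x i) ⊆ Ioc 0 (x 0) := fun i =>
    Ioc_subset_Ioc (hx0 _) (hx (Nat.zero_le i))
  rw [← integral_biUnion_finset (s := fun i => Ioc (x (i + 1)) (x i)) _
    (fun i _ => measurableSet_Ioc) (hx.pairwise_disjoint_on_Ioc_succ.set_pairwise _)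
    fun i _ => hI.mono_set (hsub i)]
  exact setIntegral_mono_set hI (ae_restrict_of_forall_mem measurableSet_Ioc hf)
    (Eventually.of_forall (iUnion₂_subset fun i _ => hsub i))

theorem log_mul_sum_le_setIntegral_div {ν : ℝ → ℝ} {q s : ℝ} (hq : 1 < q) (hs : 0 < s)
    (hmono : MonotoneOn ν (Ioc 0 s)) (hnonneg : ∀ t ∈ Ioc 0 s, 0 ≤ ν t)
    (hI : IntegrableOn (fun t => ν t / t) (Ioc 0 s)) (n : ℕ) :
    Real.log q * ∑ i ∈ Finset.range n, ν (s * q⁻¹ ^ (i + 1)) ≤ ∫ t in Ioc 0 s, ν t / t := by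
  set x : ℕ → ℝ := fun i => s * q⁻¹ ^ i
  have hxs : x 0 = s := by simp [x]
  have hx : Antitone x := fun i j hij => mul_le_mul_of_nonneg_left
    (pow_le_pow_of_le_one (by positivity) (inv_le_one_of_one_le₀ hq.le) hij) hs.le
  have hxpos : ∀ i, 0 < x i := fun i => by positivity
  have hxle : ∀ i, x i ≤ s := fun i => hxs ▸ hx (Nat.zero_le i)
  have hpiece : ∀ i, Real.log q * ν (x (i + 1)) ≤ ∫ t in Ioc (x (i + 1)) (x i), ν t / t := by
    intro i
    have hratio : x i / x (i + 1) = q := by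
      simp only [x, pow_succ]; field_simp
    have hsub : Ioc (x (i + 1)) (x i) ⊆ Ioc 0 s := Ioc_subset_Ioc (hxpos _).le (hxle i)
    rw [mul_comm, ← hratio]
    exact mul_log_div_le_setIntegral_div (hxpos _) (hx i.le_succ)
      (hmono.mono ((Icc_subset_Ioc_iff (hx i.le_succ)).2 ⟨hxpos _, hxle i⟩)) (hI.mono_set hsub)
  calc Real.log q * ∑ i ∈ Finset.range n, ν (s * q⁻¹ ^ (i + 1))
      = ∑ i ∈ Finset.range n, Real.log q * ν (x (i + 1)) := Finset.mul_sum _ _ _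
    _ ≤ ∑ i ∈ Finset.range n, ∫ t in Ioc (x (i + 1)) (x i), ν t / t :=
      Finset.sum_le_sum fun i _ => hpiece i
    _ ≤ ∫ t in Ioc 0 s, ν t / t := by
      rw [← hxs] at hnonneg hI ⊢
      exact sum_setIntegral_Ioc_succ_le hx (fun i => (hxpos i).le)
        (fun t ht => div_nonneg (hnonneg t ht) ht.1.le) hI n

theorem stmt3_general (ν : ℝ → ℝ) (hmono : MonotoneOn ν (Set.Ici 0))
    (hpos : ∀ t, 0 < t → 0 < ν t)
    (hint : ∃ s₀ > (0:ℝ), IntegrableOn (fun t => ν t / t) (Set.Ioc 0 s₀))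
    (hlimsup : ∃ M : ℝ, ∀ᶠ s in nhdsWithin 0 (Set.Ioi 0),
      (∫ t in Set.Ioc (0:ℝ) s, ν t / t) / ν s ≤ M) :
    ∀ α : ℝ, 0 < α → α ≤ 1 →
      Summable (fun j : ℕ => ν ((2:ℝ) ^ (-((j:ℤ) + 1))) ^ α) := by
  intro α hα _
  obtain ⟨s₀, hs₀, hI⟩ := hint
  obtain ⟨M, hM⟩ := hlimsup
  have hdyadic :=
    tendsto_pow_atTop_nhdsWithin_zero_of_lt_one (r := (2:ℝ)⁻¹) (by norm_num) (by norm_num)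
  obtain ⟨J, hJ⟩ := eventually_atTop.1
    ((hdyadic.eventually hM).and (hdyadic.eventually (Ioc_mem_nhdsGT hs₀)))
  have htail : ∀ j ≥ J, ∀ n, ∑ i ∈ Finset.range n, ν ((2:ℝ)⁻¹ ^ (i + j + 1)) ≤
      max (M / Real.log 2) 0 * ν ((2:ℝ)⁻¹ ^ j) := by
    intro j hj n
    obtain ⟨hMj, hj₀⟩ := hJ j hj
    rw [div_le_iff₀ (hpos _ hj₀.1)] at hMj
    have hsum := log_mul_sum_le_setIntegral_div one_lt_two hj₀.1
      (hmono.mono fun t ht => ht.1.le) (fun t ht => (hpos t ht.1).le)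
      (hI.mono_set (Ioc_subset_Ioc_right hj₀.2)) n
    have hpow : ∀ i, (2:ℝ)⁻¹ ^ j * 2⁻¹ ^ (i + 1) = 2⁻¹ ^ (i + j + 1) := fun i => by
      rw [← pow_add]; congr 1; omega
    simp only [hpow] at hsum
    calc ∑ i ∈ Finset.range n, ν ((2:ℝ)⁻¹ ^ (i + j + 1))
        ≤ M / Real.log 2 * ν ((2:ℝ)⁻¹ ^ j) := by
          rw [div_mul_eq_mul_div, le_div_iff₀ (Real.log_pos one_lt_two)]
          linarith
      _ ≤ max (M / Real.log 2) 0 * ν ((2:ℝ)⁻¹ ^ j) := by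
          gcongr
          exacts [(hpos _ hj₀.1).le, le_max_left _ _]
  have hsummable := summable_rpow_of_sum_tail_le (a := fun k => ν ((2:ℝ)⁻¹ ^ k))
    (fun k => (hpos _ (by positivity)).le) (le_max_right _ 0) htail hα
  refine ((summable_nat_add_iff 1).2 hsummable).congr fun j => ?_
  rw [inv_pow, ← zpow_natCast, ← zpow_neg]
  push_cast
  rfl

theorem stmt3 (ν : ℝ → ℝ) (hmono : MonotoneOn ν (Set.Ici 0))
    (hnonneg : ∀ t, 0 ≤ t → 0 ≤ ν t) (hpos : ∀ t, 0 < t → 0 < ν t)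
    (hint : ∃ s₀ > (0:ℝ), IntegrableOn (fun t => ν t / t) (Set.Ioc 0 s₀))
    (hlimsup : ∃ M : ℝ, ∀ᶠ s in nhdsWithin 0 (Set.Ioi 0),
      (∫ t in Set.Ioc (0:ℝ) s, ν t / t) / ν s ≤ M) :
    ∀ α : ℝ, 0 < α → α ≤ 1 →
      Summable (fun j : ℕ => ν ((2:ℝ) ^ (-((j:ℤ) + 1))) ^ α) :=
  stmt3_general ν hmono hpos hint hlimsup
end

section
/- Let X be a real normed space, Ω ⊊ X a domain (open connected nonempty set with nonempty complement), d(x) = dist(x, ∂Ω) = dist(x, Ωᶜ) for x ∈ Ω, and define the distance ratio metric j(x,y) = log(1 + ‖x−y‖/min(d(x), d(y))) for x, y ∈ Ω. If x₀, y ∈ Ω satisfy j(x₀, y) ≤ log 2, then for every t ∈ [0,1] the segment point t·y + (1−t)·x₀ lies in Ω and j(x₀, t·y + (1−t)·x₀) ≤ log 2. In other words, the j-metric ball B_j(x₀, log 2) is starlike with respect to its center x₀. -/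
theorem stmt6 {X : Type*} [NormedAddCommGroup X] [NormedSpace ℝ X]
    (Ω : Set X) (hΩ : IsOpen Ω) (hconn : IsConnected Ω) (hne : Ωᶜ.Nonempty)
    (x₀ y : X) (hx₀ : x₀ ∈ Ω) (hy : y ∈ Ω)
    (hj : Real.log (1 + ‖x₀ - y‖ /
        min (Metric.infDist x₀ Ωᶜ) (Metric.infDist y Ωᶜ)) ≤ Real.log 2) :
    ∀ t ∈ Set.Icc (0:ℝ) 1, (t • y + (1 - t) • x₀ ∈ Ω) ∧
      Real.log (1 + ‖x₀ - (t • y + (1 - t) • x₀)‖ /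
        min (Metric.infDist x₀ Ωᶜ) (Metric.infDist (t • y + (1 - t) • x₀) Ωᶜ))
        ≤ Real.log 2 := by
  have hcl : IsClosed Ωᶜ := hΩ.isClosed_compl
  have hd0 : 0 < Metric.infDist x₀ Ωᶜ :=
    (hcl.notMem_iff_infDist_pos hne).1 (by simpa using hx₀)
  have hdy : 0 < Metric.infDist y Ωᶜ :=
    (hcl.notMem_iff_infDist_pos hne).1 (by simpa using hy)
  have hmin : 0 < min (Metric.infDist x₀ Ωᶜ) (Metric.infDist y Ωᶜ) := lt_min hd0 hdy
  set r := ‖x₀ - y‖ with hr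
  have hrmin : r ≤ min (Metric.infDist x₀ Ωᶜ) (Metric.infDist y Ωᶜ) := by
    have h1 : (1:ℝ) + r / min (Metric.infDist x₀ Ωᶜ) (Metric.infDist y Ωᶜ) ≤ 2 := by
      have hpos : (0:ℝ) < 1 + r / min (Metric.infDist x₀ Ωᶜ) (Metric.infDist y Ωᶜ) := by
        positivity
      exact (Real.log_le_log_iff hpos (by norm_num)).1 hj
    have h2 : r / min (Metric.infDist x₀ Ωᶜ) (Metric.infDist y Ωᶜ) ≤ 1 := by linarith
    exact (div_le_one hmin).1 h2
  intro t ht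
  obtain ⟨ht0, ht1⟩ := ht
  set z := t • y + (1 - t) • x₀ with hz
  have hxz : ‖x₀ - z‖ = t * r := by
    have : x₀ - z = t • (x₀ - y) := by
      rw [hz]; module
    rw [this, norm_smul, Real.norm_eq_abs, abs_of_nonneg ht0]
  have hyz : dist z y = (1 - t) * r := by
    have : z - y = (1 - t) • (x₀ - y) := by rw [hz]; module
    rw [dist_eq_norm, this, norm_smul, Real.norm_eq_abs, abs_of_nonneg (by linarith)]
  have hrd0 : r ≤ Metric.infDist x₀ Ωᶜ := hrmin.trans (min_le_left _ _)
  have hrdy : r ≤ Metric.infDist y Ωᶜ := hrmin.trans (min_le_right _ _)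
  -- z ∈ Ω
  have hzΩ : z ∈ Ω := by
    by_contra hzc
    have hzc' : z ∈ Ωᶜ := hzc
    have h1 : Metric.infDist x₀ Ωᶜ ≤ dist x₀ z := Metric.infDist_le_dist_of_mem hzc'
    rw [dist_eq_norm, hxz] at h1
    -- t * r ≥ d₀ ≥ r, so t = 1 and r = d₀, then z = y ∈ Ω, contradiction
    have hr0 : 0 ≤ r := norm_nonneg _
    have htr : t * r ≤ r := by nlinarith
    have heq : t * r = r := le_antisymm htr (hrd0.trans h1)
    have hzy : z = y := by
      have : dist z y = 0 := by rw [hyz]; nlinarith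
      exact dist_eq_zero.1 this
    exact hzc (hzy ▸ hy)
  refine ⟨hzΩ, ?_⟩
  have hdz : 0 < Metric.infDist z Ωᶜ :=
    (hcl.notMem_iff_infDist_pos hne).1 (by simpa using hzΩ)
  have hzlb : Metric.infDist y Ωᶜ ≤ Metric.infDist z Ωᶜ + dist y z :=
    Metric.infDist_le_infDist_add_dist
  rw [dist_comm] at hzlb
  have hkey : ‖x₀ - z‖ ≤ min (Metric.infDist x₀ Ωᶜ) (Metric.infDist z Ωᶜ) := by
    rw [hxz]
    refine le_min ?_ ?_
    · nlinarith [norm_nonneg (x₀ - y)]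
    · rw [hyz] at hzlb; nlinarith [norm_nonneg (x₀ - y)]
  have hminz : 0 < min (Metric.infDist x₀ Ωᶜ) (Metric.infDist z Ωᶜ) := lt_min hd0 hdz
  have h2 : (1:ℝ) + ‖x₀ - z‖ / min (Metric.infDist x₀ Ωᶜ) (Metric.infDist z Ωᶜ) ≤ 2 := by
    have := (div_le_one hminz).2 hkey
    linarith
  exact Real.log_le_log (by positivity) h2
end

section
/- Let X be a locally uniformly rotund (LUR) Banach space. Suppose x ∈ X with x ≠ 0 and (y_n) is a norm-bounded sequence in X satisfying ‖x‖ + ‖y_n‖ − ‖x + y_n‖ → 0 as n → ∞. Then dist(y_n, span{x}) → 0 as n → ∞, i.e., the distance from y_n to the one-dimensional subspace ℝ·x tends to zero. -/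
open Filter

/-- A normed space is locally uniformly rotund (LUR) if for every unit vector `x`
and every sequence `xs` of unit vectors with `‖(x + xs n)/2‖ → 1`, one has `xs n → x`. -/
def IsLUR (X : Type*) [NormedAddCommGroup X] [NormedSpace ℝ X] : Prop :=
  ∀ (x : X) (xs : ℕ → X), ‖x‖ = 1 → (∀ n, ‖xs n‖ = 1) →
    Tendsto (fun n => ‖(1/2 : ℝ) • (x + xs n)‖) atTop (nhds 1) →
    Tendsto (fun n => ‖xs n - x‖) atTop (nhds 0)

lemma aux_lur {X : Type*} [NormedAddCommGroup X] [NormedSpace ℝ X]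
    (hLUR : IsLUR X) (x : X) (hx : x ≠ 0) (y : ℕ → X) (M : ℝ) (hM : ∀ n, ‖y n‖ ≤ M)
    (c : ℝ) (hc : 0 < c) (hcy : ∀ᶠ n in atTop, c ≤ ‖y n‖)
    (h : Tendsto (fun n => ‖x‖ + ‖y n‖ - ‖x + y n‖) atTop (nhds 0)) :
    Tendsto (fun n => Metric.infDist (y n) ((Submodule.span ℝ {x} : Submodule ℝ X) : Set X))
      atTop (nhds 0) := by
  classical
  have half_norm : ∀ w : X, ‖(1/2 : ℝ) • w‖ = ‖w‖ / 2 := fun w => by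
    rw [norm_smul, Real.norm_eq_abs, abs_of_pos (by norm_num : (0:ℝ) < 1/2)]; ring
  have hxpos : 0 < ‖x‖ := norm_pos_iff.2 hx
  set u : X := ‖x‖⁻¹ • x with hu_def
  have hu : ‖u‖ = 1 := by
    rw [hu_def, norm_smul, Real.norm_eq_abs, abs_of_pos (inv_pos.2 hxpos),
      inv_mul_cancel₀ hxpos.ne']
  set v : ℕ → X := fun n => if y n = 0 then u else ‖y n‖⁻¹ • y n with hv_def
  have hv : ∀ n, ‖v n‖ = 1 := by
    intro n
    by_cases hn : y n = 0
    · simp [hv_def, hn, hu]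
    · have : 0 < ‖y n‖ := norm_pos_iff.2 hn
      simp [hv_def, hn, norm_smul, Real.norm_eq_abs, abs_of_pos (inv_pos.2 this),
        inv_mul_cancel₀ this.ne']
  set m : ℝ := min ‖x‖ c with hm_def
  have hm : 0 < m := lt_min hxpos hc
  -- key lower bound for the norm of the midpoint
  have hlow : ∀ᶠ n in atTop,
      1 - (‖x‖ + ‖y n‖ - ‖x + y n‖) / (2 * m) ≤ ‖(1/2 : ℝ) • (u + v n)‖ := by
    filter_upwards [hcy] with n hn
    have hyn : y n ≠ 0 := by
      intro h0; rw [h0, norm_zero] at hn; exact absurd hn (not_le.2 hc)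
    have hβ : 0 < ‖y n‖ := norm_pos_iff.2 hyn
    have hmx : m ≤ ‖x‖ := min_le_left _ _
    have hmy : m ≤ ‖y n‖ := le_trans (min_le_right _ _) hn
    have hvn : v n = ‖y n‖⁻¹ • y n := by simp [hv_def, hyn]
    have key : m⁻¹ • (x + y n)
        = (u + v n) + (m⁻¹ - ‖x‖⁻¹) • x + (m⁻¹ - ‖y n‖⁻¹) • y n := by
      rw [hu_def, hvn]; module
    have h1 : ‖m⁻¹ • (x + y n)‖
        ≤ ‖u + v n‖ + ‖(m⁻¹ - ‖x‖⁻¹) • x‖ + ‖(m⁻¹ - ‖y n‖⁻¹) • y n‖ := by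
      rw [key]; exact norm_add₃_le
    have e0 : ‖m⁻¹ • (x + y n)‖ = m⁻¹ * ‖x + y n‖ := by
      rw [norm_smul, Real.norm_eq_abs, abs_of_pos (inv_pos.2 hm)]
    have e1 : ‖(m⁻¹ - ‖x‖⁻¹) • x‖ = (m⁻¹ - ‖x‖⁻¹) * ‖x‖ := by
      rw [norm_smul, Real.norm_eq_abs,
        abs_of_nonneg (sub_nonneg.2 (inv_anti₀ hm hmx))]
    have e2 : ‖(m⁻¹ - ‖y n‖⁻¹) • y n‖ = (m⁻¹ - ‖y n‖⁻¹) * ‖y n‖ := by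
      rw [norm_smul, Real.norm_eq_abs,
        abs_of_nonneg (sub_nonneg.2 (inv_anti₀ hm hmy))]
    rw [e0, e1, e2] at h1
    rw [half_norm]
    have hxinv : ‖x‖⁻¹ * ‖x‖ = 1 := inv_mul_cancel₀ hxpos.ne'
    have hyinv : ‖y n‖⁻¹ * ‖y n‖ = 1 := inv_mul_cancel₀ hβ.ne'
    have h2 : 2 - (‖x‖ + ‖y n‖ - ‖x + y n‖) / m ≤ ‖u + v n‖ := by
      have h4 := h1
      rw [sub_mul, sub_mul, hxinv, hyinv] at h4
      have hm' : m ≠ 0 := hm.ne'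
      have h3 : (‖x‖ + ‖y n‖ - ‖x + y n‖) / m
          = m⁻¹ * ‖x‖ + m⁻¹ * ‖y n‖ - m⁻¹ * ‖x + y n‖ := by
        field_simp
      rw [h3]
      linarith
    have : (2 - (‖x‖ + ‖y n‖ - ‖x + y n‖) / m) / 2 ≤ ‖u + v n‖ / 2 := by linarith
    calc 1 - (‖x‖ + ‖y n‖ - ‖x + y n‖) / (2 * m)
        = (2 - (‖x‖ + ‖y n‖ - ‖x + y n‖) / m) / 2 := by ring
      _ ≤ ‖u + v n‖ / 2 := this
  have hhigh : ∀ n, ‖(1/2 : ℝ) • (u + v n)‖ ≤ 1 := by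
    intro n
    calc ‖(1/2 : ℝ) • (u + v n)‖ = ‖u + v n‖ / 2 := half_norm _
      _ ≤ (‖u‖ + ‖v n‖) / 2 := by gcongr; exact norm_add_le _ _
      _ = 1 := by rw [hu, hv n]; norm_num
  have hmid : Tendsto (fun n => ‖(1/2 : ℝ) • (u + v n)‖) atTop (nhds 1) := by
    have hl : Tendsto (fun n => 1 - (‖x‖ + ‖y n‖ - ‖x + y n‖) / (2 * m))
        atTop (nhds 1) := by
      have h5 : Tendsto (fun n => (1:ℝ) - (‖x‖ + ‖y n‖ - ‖x + y n‖) / (2 * m))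
          atTop (nhds (1 - 0 / (2 * m))) :=
        Tendsto.sub tendsto_const_nhds (h.div_const (2 * m))
      simpa using h5
    exact tendsto_of_tendsto_of_tendsto_of_le_of_le' hl tendsto_const_nhds hlow
      (Eventually.of_forall hhigh)
  have hvu : Tendsto (fun n => ‖v n - u‖) atTop (nhds 0) := hLUR u v hu hv hmid
  -- conclude
  have hMpos : 0 ≤ M := le_trans (norm_nonneg _) (hM 0)
  have hup : ∀ᶠ n in atTop,
      Metric.infDist (y n) ((Submodule.span ℝ {x} : Submodule ℝ X) : Set X)
        ≤ M * ‖v n - u‖ := by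
    filter_upwards [hcy] with n hn
    have hyn : y n ≠ 0 := by
      intro h0; rw [h0, norm_zero] at hn; exact absurd hn (not_le.2 hc)
    have hvn : v n = ‖y n‖⁻¹ • y n := by simp [hv_def, hyn]
    have hmem : ‖y n‖ • u ∈ (Submodule.span ℝ {x} : Submodule ℝ X) := by
      apply Submodule.smul_mem
      rw [hu_def]
      exact Submodule.smul_mem _ _ (Submodule.mem_span_singleton_self x)
    calc Metric.infDist (y n) ((Submodule.span ℝ {x} : Submodule ℝ X) : Set X)
        ≤ dist (y n) (‖y n‖ • u) := Metric.infDist_le_dist_of_mem hmem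
      _ = ‖y n‖ * ‖v n - u‖ := by
          rw [dist_eq_norm, ← norm_smul_of_nonneg (norm_nonneg (y n)), smul_sub, hvn,
            smul_inv_smul₀ (norm_pos_iff.2 hyn).ne']
      _ ≤ M * ‖v n - u‖ := by gcongr; exact hM n
  have h0 : Tendsto (fun n => M * ‖v n - u‖) atTop (nhds 0) := by
    simpa using hvu.const_mul M
  exact tendsto_of_tendsto_of_tendsto_of_le_of_le' tendsto_const_nhds h0
    (Eventually.of_forall fun n => Metric.infDist_nonneg) hup

theorem stmt8 {X : Type*} [NormedAddCommGroup X] [NormedSpace ℝ X] [CompleteSpace X]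
    (hLUR : IsLUR X) (x : X) (hx : x ≠ 0) (y : ℕ → X)
    (hbdd : ∃ M : ℝ, ∀ n, ‖y n‖ ≤ M)
    (h : Tendsto (fun n => ‖x‖ + ‖y n‖ - ‖x + y n‖) atTop (nhds 0)) :
    Tendsto (fun n => Metric.infDist (y n) ((Submodule.span ℝ {x} : Submodule ℝ X) : Set X))
      atTop (nhds 0) := by
  obtain ⟨M, hM⟩ := hbdd
  apply tendsto_of_subseq_tendsto
  intro ns hns
  -- Bolzano-Weierstrass on the norms
  have hball : ∀ k, ‖y (ns k)‖ ∈ Set.Icc (0 : ℝ) M :=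
    fun k => ⟨norm_nonneg _, hM _⟩
  obtain ⟨a, ha, φ, hφ, haφ⟩ :=
    tendsto_subseq_of_bounded (Metric.isBounded_Icc (0:ℝ) M) hball
  refine ⟨φ, ?_⟩
  have ha0 : 0 ≤ a := by
    rw [closure_Icc] at ha
    exact ha.1
  set z : ℕ → X := fun k => y (ns (φ k)) with hz_def
  have hnsφ : Tendsto (fun k => ns (φ k)) atTop atTop :=
    hns.comp hφ.tendsto_atTop
  have hz : Tendsto (fun k => ‖x‖ + ‖z k‖ - ‖x + z k‖) atTop (nhds 0) :=
    h.comp hnsφ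
  rcases eq_or_lt_of_le ha0 with ha0' | ha0'
  · -- norms tend to 0, distance ≤ norm
    have hzn : Tendsto (fun k => ‖z k‖) atTop (nhds 0) := by
      rw [ha0']; exact haφ
    have hup : ∀ k, Metric.infDist (z k) ((Submodule.span ℝ {x} : Submodule ℝ X) : Set X)
        ≤ ‖z k‖ := by
      intro k
      calc Metric.infDist (z k) ((Submodule.span ℝ {x} : Submodule ℝ X) : Set X)
          ≤ dist (z k) 0 := Metric.infDist_le_dist_of_mem (Submodule.zero_mem _)
        _ = ‖z k‖ := by rw [dist_zero_right]
    exact tendsto_of_tendsto_of_tendsto_of_le_of_le tendsto_const_nhds hzn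
      (fun k => Metric.infDist_nonneg) hup
  · -- norms bounded below by a/2 eventually
    have hcy : ∀ᶠ k in atTop, a / 2 ≤ ‖z k‖ := by
      have : ∀ᶠ k in atTop, ‖z k‖ ∈ Set.Ioi (a / 2) :=
        haφ.eventually (Ioi_mem_nhds (by linarith))
      filter_upwards [this] with k hk using le_of_lt hk
    exact aux_lur hLUR x hx z M (fun k => hM _) (a / 2) (by linarith) hcy hz
end
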